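/- arXiv:2203.05903 — 5 statements merged into one kernel-verified Lean document; each statement's English description precedes it below -/
import Mathlib

section
/- Let f : ℝⁿ → ℝⁿ be any function, let v̌, v̂ ∈ ℝⁿ with v̌⁽ˡ⁾ ≤ v̂⁽ˡ⁾ for all l, and let Q = [v̌, v̂] be the corresponding axis-aligned box. Let L, U : ℝⁿ → ℝⁿ be affine maps such that L(z) ≤ f(z) ≤ U(z) componentwise for every z ∈ Q. Let V = {v ∈ ℝⁿ : v⁽ˡ⁾ ∈ {v̌⁽ˡ⁾, v̂⁽ˡ⁾} for every l} be the set of vertices of Q. Then the image f(Q) = {f(z) : z ∈ Q} is contained in the convex hull of ⋃_{v ∈ V} [L(v), U(v)], the union over vertices v of the boxes with corners L(v) and U(v). -/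
/-- Proposition 1: if `f` is bounded between two affine maps `L ≤ f ≤ U`
on an axis-aligned box `Q = Icc v̌ v̂`, then the image `f '' Q` is contained in the
convex hull of the union over vertices `v` of `Q` of the boxes `Icc (L v) (U v)`. -/
theorem image_subset_convexHull_vertex_boxes
    {n : ℕ} (f : (Fin n → ℝ) → (Fin n → ℝ))
    (vlo vhi : Fin n → ℝ) (hv : ∀ l, vlo l ≤ vhi l)
    (L U : (Fin n → ℝ) →ᵃ[ℝ] (Fin n → ℝ))
    (hL : ∀ z ∈ Set.Icc vlo vhi, L z ≤ f z)
    (hU : ∀ z ∈ Set.Icc vlo vhi, f z ≤ U z)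
    (V : Set (Fin n → ℝ))
    (hV : V = {v | ∀ l, v l = vlo l ∨ v l = vhi l}) :
    f '' Set.Icc vlo vhi ⊆
      convexHull ℝ (⋃ v ∈ V, Set.Icc (L v) (U v)) := by
  rintro _ ⟨z, hz, rfl⟩
  -- componentwise interpolation parameter
  set t : Fin n → ℝ := fun l =>
    if U z l = L z l then 0 else (f z l - L z l) / (U z l - L z l) with ht
  have hLf := hL z hz
  have hfU := hU z hz
  have ht0 : ∀ l, 0 ≤ t l := by
    intro l
    simp only [ht]
    split
    · norm_num
    · exact div_nonneg (by linarith [hLf l]) (by linarith [hLf l, hfU l])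
  have ht1 : ∀ l, t l ≤ 1 := by
    intro l
    simp only [ht]
    split
    · norm_num
    · rename_i h
      have hlt : 0 < U z l - L z l := by
        rcases lt_or_eq_of_le (le_trans (hLf l) (hfU l)) with h' | h'
        · linarith
        · exact absurd h'.symm h
      rw [div_le_one hlt]
      linarith [hfU l]
  have hfz : ∀ l, f z l = (1 - t l) * L z l + t l * U z l := by
    intro l
    simp only [ht]
    split
    · rename_i h
      have : f z l = L z l := le_antisymm (by simpa [h] using hfU l) (hLf l)
      simp [this]
    · rename_i h
      have hne : U z l - L z l ≠ 0 := fun hc => h (by linarith [sub_eq_zero.mp hc])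
      field_simp
      ring
  -- the affine interpolation map
  set g : (Fin n → ℝ) →ᵃ[ℝ] (Fin n → ℝ) :=
    AffineMap.pi (fun l => (1 - t l) • ((AffineMap.proj l).comp L)
      + (t l) • ((AffineMap.proj l).comp U)) with hgdef
  have hg : ∀ y, g y = fun l => (1 - t l) * L y l + t l * U y l := by
    intro y
    funext l
    simp [hgdef, AffineMap.pi_apply, AffineMap.proj_apply, smul_eq_mul]
  -- z is in the convex hull of the vertex set
  have hVpi : V = Set.univ.pi (fun l => {vlo l, vhi l}) := by
    rw [hV]; ext v; simp [Set.mem_pi]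
  have hzV : z ∈ convexHull ℝ V := by
    rw [hVpi]
    apply mem_convexHull_pi
    intro l _
    rw [convexHull_pair, segment_eq_Icc (hv l)]
    exact ⟨hz.1 l, hz.2 l⟩
  have hfg : f z = g z := by
    funext l; rw [hg]; exact hfz l
  rw [hfg]
  have hmem : g z ∈ convexHull ℝ (g '' V) := by
    rw [← AffineMap.image_convexHull]
    exact ⟨z, hzV, rfl⟩
  refine convexHull_mono ?_ hmem
  rintro _ ⟨v, hvV, rfl⟩
  have hvIcc : v ∈ Set.Icc vlo vhi := by
    rw [hV] at hvV
    refine ⟨fun l => ?_, fun l => ?_⟩ <;> rcases hvV l with h | h <;> simp [h, hv l]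
  have hLUv : ∀ l, L v l ≤ U v l := fun l => le_trans (hL v hvIcc l) (hU v hvIcc l)
  refine Set.mem_iUnion₂.mpr ⟨v, hvV, ?_⟩
  rw [hg, Set.mem_Icc]
  constructor <;> intro l <;> simp only
  · nlinarith [ht0 l, ht1 l, hLUv l]
  · nlinarith [ht0 l, ht1 l, hLUv l]
end

section
/- Let S ⊆ ℝⁿ be a finite set and let L, U : ℝⁿ → ℝⁿ be affine maps such that L(z) ≤ U(z) componentwise for every z in the convex hull of S. Then ⋃_{z ∈ conv(S)} [L(z), U(z)] ⊆ conv( ⋃_{v ∈ S} [L(v), U(v)] ), i.e., the union over all points z of the convex hull of S of the boxes with corners L(z) and U(z) is contained in the convex hull of the union over v ∈ S of the boxes with corners L(v) and U(v). -/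
open Set

section

variable {𝕜 ι : Type*} [Field 𝕜] [LinearOrder 𝕜] [IsStrictOrderedRing 𝕜]

theorem Icc_eq_image_mul_sub_add {a b : 𝕜} (h : a ≤ b) :
    Icc a b = (fun t => t * (b - a) + a) '' Icc 0 1 := by
  rw [← segment_eq_Icc h, segment_eq_image_lineMap]
  rfl

theorem Pi.exists_mem_Icc_zero_one_eq_mul_sub_add {a b x : ι → 𝕜} (hx : x ∈ Icc a b) :
    ∃ θ ∈ Icc (0 : ι → 𝕜) 1, θ * (b - a) + a = x := by
  have hcoord : ∀ i, ∃ t ∈ Icc (0 : 𝕜) 1, t * (b i - a i) + a i = x i := fun i => by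
    rw [← mem_image, ← Icc_eq_image_mul_sub_add (hx.1.trans hx.2 i)]
    exact ⟨hx.1 i, hx.2 i⟩
  choose θ hθ hθx using hcoord
  exact ⟨θ, ⟨fun i => (hθ i).1, fun i => (hθ i).2⟩, funext hθx⟩

theorem Pi.mul_sub_add_mem_Icc {a b θ : ι → 𝕜} (hab : a ≤ b) (hθ : θ ∈ Icc (0 : ι → 𝕜) 1) :
    θ * (b - a) + a ∈ Icc a b := by
  have hcoord : ∀ i, θ i * (b i - a i) + a i ∈ Icc (a i) (b i) := fun i => by
    rw [Icc_eq_image_mul_sub_add (hab i)]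
    exact mem_image_of_mem _ ⟨hθ.1 i, hθ.2 i⟩
  exact ⟨fun i => (hcoord i).1, fun i => (hcoord i).2⟩

variable {E : Type*} [AddCommGroup E] [Module 𝕜 E]

theorem iUnion_Icc_convexHull_subset_convexHull_iUnion_Icc (s : Set E)
    (L U : E →ᵃ[𝕜] ι → 𝕜) (hLU : ∀ v ∈ s, L v ≤ U v) :
    (⋃ z ∈ convexHull 𝕜 s, Icc (L z) (U z)) ⊆ convexHull 𝕜 (⋃ v ∈ s, Icc (L v) (U v)) := by
  simp only [iUnion_subset_iff]
  intro z hz x hx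
  obtain ⟨θ, hθ, rfl⟩ := Pi.exists_mem_Icc_zero_one_eq_mul_sub_add hx
  -- `x` is the image of `z` under an affine map sending each `v` into its own box `[L v, U v]`.
  let P : E →ᵃ[𝕜] ι → 𝕜 := (LinearMap.mulLeft 𝕜 θ).toAffineMap.comp (U - L) + L
  have hPs : P '' s ⊆ ⋃ v ∈ s, Icc (L v) (U v) := by
    rintro _ ⟨v, hv, rfl⟩
    exact mem_biUnion hv (Pi.mul_sub_add_mem_Icc (hLU v hv) hθ)
  exact convexHull_mono hPs (P.image_convexHull s ▸ mem_image_of_mem P hz)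

end

/-- for a finite set `S` and affine maps `L, U` with `L z ≤ U z` on the
convex hull of `S`, the union over `z ∈ conv S` of the boxes `Icc (L z) (U z)` is
contained in the convex hull of the union over `v ∈ S` of the boxes `Icc (L v) (U v)`. -/
theorem iUnion_boxes_convexHull_subset
    {n : ℕ} (S : Finset (Fin n → ℝ))
    (L U : (Fin n → ℝ) →ᵃ[ℝ] (Fin n → ℝ))
    (hLU : ∀ z ∈ convexHull ℝ (S : Set (Fin n → ℝ)), L z ≤ U z) :
    (⋃ z ∈ convexHull ℝ (S : Set (Fin n → ℝ)), Set.Icc (L z) (U z)) ⊆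
      convexHull ℝ (⋃ v ∈ (S : Set (Fin n → ℝ)), Set.Icc (L v) (U v)) :=
  iUnion_Icc_convexHull_subset_convexHull_iUnion_Icc _ L U
    fun v hv => hLU v (subset_convexHull ℝ _ hv)
end

section
/- Fix x̌, x̂ ∈ ℝⁿ with x̌⁽ˡ⁾ ≤ x̂⁽ˡ⁾ for every l, and let g be the associated erf-product function. Then for every nonempty finite set V ⊆ ℝⁿ and every z in the convex hull of V, there exists v ∈ V with g(v) ≤ g(z); i.e., the minimum of g over conv(V) equals the minimum of g over V. -/
/-!
Up to the scaling `u = z / √2`, each factor of `gerf` is `erf (u - a) - erf (u - b)`, a multiple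
of the Gaussian mass of `[u - b, u - a]`. Its logarithm is concave because `f'' f ≤ f'²`, which
reduces to the estimate `(α e^{-α²} - β e^{-β²}) ∫_α^β e^{-x²} ≤ (e^{-α²} - e^{-β²})² / 2`.
So `gerf` is either identically zero or an increasing function of a concave one, hence
quasiconcave; and a quasiconcave function is minimised over a convex hull at a generating point,
since the set where it exceeds its value at `z` is convex.
-/

/-- The Gauss error function `erf x = (2/√π) ∫₀ˣ exp (−t²) dt`. -/
noncomputable def erf (x : ℝ) : ℝ :=
  (2 / Real.sqrt Real.pi) * ∫ t in (0:ℝ)..x, Real.exp (-t ^ 2)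

/-- The erf-product function
`g z = 2⁻ⁿ ∏ₗ (erf((zₗ − x̌ₗ)/√2) − erf((zₗ − x̂ₗ)/√2))`. -/
noncomputable def gerf {n : ℕ} (xlo xhi : Fin n → ℝ) (z : Fin n → ℝ) : ℝ :=
  (1 / 2 : ℝ) ^ n *
    ∏ l, (erf ((z l - xlo l) / Real.sqrt 2) - erf ((z l - xhi l) / Real.sqrt 2))

open Real Set

lemma QuasiconcaveOn.exists_le_of_mem_convexHull {E β : Type*} [AddCommGroup E] [Module ℝ E]
    [LinearOrder β] {s t : Set E} {f : E → β} {x : E} (hf : QuasiconcaveOn ℝ s f) (hts : t ⊆ s)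
    (hx : x ∈ convexHull ℝ t) : ∃ y ∈ t, f y ≤ f x := by
  by_contra! h
  have hsub : convexHull ℝ t ⊆ {y ∈ s | f x < f y} :=
    convexHull_min (fun y hy => ⟨hts hy, h y hy⟩) (hf.convex_gt (f x))
  exact lt_irrefl _ (hsub hx).2

lemma concaveOn_sum {ι E : Type*} [AddCommGroup E] [Module ℝ E] {s : Set E} (hs : Convex ℝ s)
    (t : Finset ι) {f : ι → E → ℝ} (hf : ∀ i ∈ t, ConcaveOn ℝ s (f i)) :
    ConcaveOn ℝ s (fun x => ∑ i ∈ t, f i x) := by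
  induction t using Finset.cons_induction with
  | empty => simpa using concaveOn_const (0 : ℝ) hs
  | cons i t hi ih =>
    simp only [Finset.sum_cons]
    exact (hf i (t.mem_cons_self i)).add (ih fun j hj => hf j (Finset.mem_cons_of_mem hj))

lemma concaveOn_log_of_mul_le_sq {f f' f'' : ℝ → ℝ} (hf : ∀ x, HasDerivAt f (f' x) x)
    (hf' : ∀ x, HasDerivAt f' (f'' x) x) (hpos : ∀ x, 0 < f x)
    (hle : ∀ x, f'' x * f x ≤ f' x ^ 2) : ConcaveOn ℝ univ (fun x => log (f x)) := by
  have hlog x : HasDerivAt (fun x => log (f x)) (f' x / f x) x := (hf x).log (hpos x).ne'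
  refine concaveOn_of_hasDerivWithinAt2_nonpos convex_univ
    (f'' := fun x => (f'' x * f x - f' x * f' x) / f x ^ 2)
    (fun x _ => (hlog x).continuousAt.continuousWithinAt) (fun x _ => (hlog x).hasDerivWithinAt)
    (fun x _ => ((hf' x).div (hf x) (hpos x).ne').hasDerivWithinAt) fun x _ => ?_
  exact div_nonpos_of_nonpos_of_nonneg (by linarith [hle x, sq (f' x)]) (sq_nonneg _)

lemma continuous_exp_neg_sq : Continuous fun x : ℝ => exp (-x ^ 2) := by fun_prop

lemma hasDerivAt_exp_neg_sq (x : ℝ) :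
    HasDerivAt (fun x => exp (-x ^ 2)) (-2 * x * exp (-x ^ 2)) x :=
  (hasDerivAt_pow 2 x).neg.exp.congr_deriv (by simp only [Pi.neg_apply]; push_cast; ring)

lemma integral_two_mul_mul_exp_neg_sq (α β : ℝ) :
    ∫ x in α..β, 2 * x * exp (-x ^ 2) = exp (-α ^ 2) - exp (-β ^ 2) := by
  have hderiv x : HasDerivAt (fun x => -exp (-x ^ 2)) (2 * x * exp (-x ^ 2)) x :=
    (hasDerivAt_exp_neg_sq x).neg.congr_deriv (by ring)
  rw [intervalIntegral.integral_eq_sub_of_hasDerivAt (fun x _ => hderiv x)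
    (Continuous.intervalIntegrable (by fun_prop) _ _)]
  ring

lemma mul_integral_exp_neg_sq_le_of_nonneg {α β : ℝ} (hα : 0 ≤ α) (hαβ : α ≤ β) :
    (α * exp (-α ^ 2) - β * exp (-β ^ 2)) * ∫ x in α..β, exp (-x ^ 2)
      ≤ (exp (-α ^ 2) - exp (-β ^ 2)) ^ 2 / 2 := by
  -- `2 α exp (-x²) ≤ 2 x exp (-x²)` on `[α, β]`, integrated exactly.
  have hαI : 2 * α * ∫ x in α..β, exp (-x ^ 2) ≤ exp (-α ^ 2) - exp (-β ^ 2) := by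
    rw [← integral_two_mul_mul_exp_neg_sq, ← intervalIntegral.integral_const_mul]
    refine intervalIntegral.integral_mono_on hαβ
      (Continuous.intervalIntegrable (by fun_prop) _ _)
      (Continuous.intervalIntegrable (by fun_prop) _ _) fun x hx => ?_
    have := exp_pos (-x ^ 2)
    nlinarith [hx.1]
  set I := ∫ x in α..β, exp (-x ^ 2)
  set D := exp (-α ^ 2) - exp (-β ^ 2)
  have hI : 0 ≤ I := intervalIntegral.integral_nonneg hαβ fun x _ => (exp_pos _).le
  have hD : 0 ≤ D := by
    simp only [D, sub_nonneg, exp_le_exp, neg_le_neg_iff]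
    exact pow_le_pow_left₀ hα hαβ 2
  have hP : α * exp (-α ^ 2) - β * exp (-β ^ 2) ≤ α * D := by
    have := mul_le_mul_of_nonneg_right hαβ (exp_pos (-β ^ 2)).le
    linarith
  calc (α * exp (-α ^ 2) - β * exp (-β ^ 2)) * I ≤ α * D * I := by gcongr
    _ = D * (2 * α * I) / 2 := by ring
    _ ≤ D * D / 2 := by gcongr
    _ = D ^ 2 / 2 := by ring

-- For `β ≤ 0` reflect through the origin; for `α < 0 < β` the left-hand side is `≤ 0`.
lemma mul_integral_exp_neg_sq_le {α β : ℝ} (hαβ : α ≤ β) :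
    (α * exp (-α ^ 2) - β * exp (-β ^ 2)) * ∫ x in α..β, exp (-x ^ 2)
      ≤ (exp (-α ^ 2) - exp (-β ^ 2)) ^ 2 / 2 := by
  rcases le_or_gt 0 α with hα | hα
  · exact mul_integral_exp_neg_sq_le_of_nonneg hα hαβ
  rcases le_or_gt β 0 with hβ | hβ
  · have hreflect := mul_integral_exp_neg_sq_le_of_nonneg (neg_nonneg.2 hβ) (neg_le_neg hαβ)
    rw [← intervalIntegral.integral_comp_neg (fun x => exp (-x ^ 2))] at hreflect
    simp only [even_two.neg_pow] at hreflect
    linarith [hreflect, sq_nonneg (exp (-α ^ 2) - exp (-β ^ 2))]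
  · have hP : α * exp (-α ^ 2) - β * exp (-β ^ 2) ≤ 0 := by
      nlinarith [exp_pos (-α ^ 2), exp_pos (-β ^ 2)]
    have hI : 0 ≤ ∫ x in α..β, exp (-x ^ 2) :=
      intervalIntegral.integral_nonneg hαβ fun x _ => (exp_pos _).le
    nlinarith [mul_nonpos_of_nonpos_of_nonneg hP hI, sq_nonneg (exp (-α ^ 2) - exp (-β ^ 2))]

lemma hasDerivAt_erf (x : ℝ) : HasDerivAt erf (2 / √π * exp (-x ^ 2)) x :=
  (intervalIntegral.integral_hasDerivAt_right (continuous_exp_neg_sq.intervalIntegrable 0 x)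
    (continuous_exp_neg_sq.stronglyMeasurableAtFilter _ _)
    continuous_exp_neg_sq.continuousAt).const_mul _

lemma strictMono_erf : StrictMono erf :=
  strictMono_of_hasDerivAt_pos hasDerivAt_erf fun x => by positivity

lemma erf_sub_erf (x y : ℝ) : erf x - erf y = 2 / √π * ∫ t in y..x, exp (-t ^ 2) := by
  rw [erf, erf, ← mul_sub, intervalIntegral.integral_interval_sub_left
    (continuous_exp_neg_sq.intervalIntegrable _ _) (continuous_exp_neg_sq.intervalIntegrable _ _)]

lemma concaveOn_log_erf_sub_erf {a b : ℝ} (hab : a < b) :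
    ConcaveOn ℝ univ (fun u => log (erf (u - a) - erf (u - b))) := by
  have hf u : HasDerivAt (fun u => erf (u - a) - erf (u - b))
      (2 / √π * (exp (-(u - a) ^ 2) - exp (-(u - b) ^ 2))) u :=
    (((hasDerivAt_erf _).comp u ((hasDerivAt_id u).sub_const a)).sub
      ((hasDerivAt_erf _).comp u ((hasDerivAt_id u).sub_const b))).congr_deriv
        (by simp only [id, mul_one]; ring)
  have hf' u : HasDerivAt (fun u => 2 / √π * (exp (-(u - a) ^ 2) - exp (-(u - b) ^ 2)))
      (2 / √π * (-2 * (u - a) * exp (-(u - a) ^ 2) + 2 * (u - b) * exp (-(u - b) ^ 2))) u :=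
    ((((hasDerivAt_exp_neg_sq _).comp u ((hasDerivAt_id u).sub_const a)).sub
      ((hasDerivAt_exp_neg_sq _).comp u ((hasDerivAt_id u).sub_const b))).const_mul
        (2 / √π)).congr_deriv (by simp only [id, mul_one]; ring)
  refine concaveOn_log_of_mul_le_sq hf hf'
    (fun u => sub_pos.2 (strictMono_erf (by linarith))) fun u => ?_
  have hgauss := mul_integral_exp_neg_sq_le (α := u - b) (β := u - a) (by linarith)
  rw [erf_sub_erf]
  calc 2 / √π * (-2 * (u - a) * exp (-(u - a) ^ 2) + 2 * (u - b) * exp (-(u - b) ^ 2)) *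
        (2 / √π * ∫ t in u - b..u - a, exp (-t ^ 2))
      = 2 * (2 / √π) ^ 2 * (((u - b) * exp (-(u - b) ^ 2) - (u - a) * exp (-(u - a) ^ 2)) *
          ∫ t in u - b..u - a, exp (-t ^ 2)) := by ring
    _ ≤ 2 * (2 / √π) ^ 2 * ((exp (-(u - b) ^ 2) - exp (-(u - a) ^ 2)) ^ 2 / 2) := by gcongr
    _ = (2 / √π * (exp (-(u - a) ^ 2) - exp (-(u - b) ^ 2))) ^ 2 := by ring

section gerf

variable {n : ℕ} {xlo xhi : Fin n → ℝ}

lemma erf_sub_erf_div_sqrt_two_pos {a b : ℝ} (hab : a < b) (t : ℝ) :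
    0 < erf ((t - a) / √2) - erf ((t - b) / √2) :=
  sub_pos.2 (strictMono_erf (by gcongr))

lemma concaveOn_log_gerf_factor {l : Fin n} (hl : xlo l < xhi l) :
    ConcaveOn ℝ univ
      (fun z : Fin n → ℝ => log (erf ((z l - xlo l) / √2) - erf ((z l - xhi l) / √2))) := by
  have hlt : xlo l / √2 < xhi l / √2 := by gcongr
  refine ((concaveOn_log_erf_sub_erf hlt).comp_linearMap
    ((√2)⁻¹ • LinearMap.proj (R := ℝ) (φ := fun _ : Fin n => ℝ) l)).congr fun z _ => ?_
  simp [div_eq_inv_mul, mul_sub]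

lemma gerf_eq_mul_exp_sum_log (hlt : ∀ l, xlo l < xhi l) (z : Fin n → ℝ) :
    gerf xlo xhi z = (1 / 2) ^ n *
      exp (∑ l, log (erf ((z l - xlo l) / √2) - erf ((z l - xhi l) / √2))) := by
  rw [gerf, exp_sum]
  congr 1
  exact Finset.prod_congr rfl fun l _ =>
    (exp_log (erf_sub_erf_div_sqrt_two_pos (hlt l) (z l))).symm

lemma gerf_eq_zero_of_eq {l : Fin n} (hl : xlo l = xhi l) (z : Fin n → ℝ) :
    gerf xlo xhi z = 0 := by
  rw [gerf, Finset.prod_eq_zero (Finset.mem_univ l) (by rw [hl, sub_self]), mul_zero]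

lemma quasiconcaveOn_gerf (hx : ∀ l, xlo l ≤ xhi l) : QuasiconcaveOn ℝ univ (gerf xlo xhi) := by
  by_cases hlt : ∀ l, xlo l < xhi l
  · rw [funext (gerf_eq_mul_exp_sum_log hlt)]
    have hmono : Monotone fun s : ℝ => (1 / 2 : ℝ) ^ n * exp s := fun s t hst =>
      mul_le_mul_of_nonneg_left (exp_le_exp.2 hst) (by positivity)
    exact QuasiconcaveOn.monotone_comp (g := fun s : ℝ => (1 / 2 : ℝ) ^ n * exp s) hmono
      (concaveOn_sum convex_univ _ fun l _ => concaveOn_log_gerf_factor (hlt l)).quasiconcaveOn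
  · obtain ⟨l, hl⟩ := not_forall.1 hlt
    rw [funext (gerf_eq_zero_of_eq (le_antisymm (hx l) (not_lt.1 hl)))]
    exact (concaveOn_const 0 convex_univ).quasiconcaveOn

end gerf

theorem gerf_min_on_convexHull_attained_at_points_general
    {n : ℕ} (xlo xhi : Fin n → ℝ) (hx : ∀ l, xlo l ≤ xhi l)
    (V : Finset (Fin n → ℝ)) :
    ∀ z ∈ convexHull ℝ (V : Set (Fin n → ℝ)), ∃ v ∈ V,
      gerf xlo xhi v ≤ gerf xlo xhi z := fun _ hz =>
  (quasiconcaveOn_gerf hx).exists_le_of_mem_convexHull (subset_univ _) hz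

/-- Lemma 1: the minimum of the erf-product function `g` over the convex
hull of a finite set `V` is attained at one of the points of `V`. -/
theorem gerf_min_on_convexHull_attained_at_points
    {n : ℕ} (xlo xhi : Fin n → ℝ) (hx : ∀ l, xlo l ≤ xhi l)
    (V : Finset (Fin n → ℝ)) (hV : V.Nonempty) :
    ∀ z ∈ convexHull ℝ (V : Set (Fin n → ℝ)), ∃ v ∈ V,
      gerf xlo xhi v ≤ gerf xlo xhi z :=
  gerf_min_on_convexHull_attained_at_points_general xlo xhi hx V
end

section
/- Let a, b ∈ ℝ with a < b and let h(z) = erf((z − a)/√2) − erf((z − b)/√2). Then h(z) > 0 for all z ∈ ℝ and the function z ↦ log h(z) is concave on ℝ. -/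
/-!
After the substitution `t = s/√2`, `h z` is a positive multiple of the window integral
`W z = ∫_{z-b}^{z-a} f` of the Gaussian `f s = exp (-s²/2)`. Since `f' = g f` with `g s = -s`
antitone, integrating `g f` over `[β, α]` gives `g α ∫f ≤ f α - f β ≤ g β ∫f`, and these two
bounds combine to `W'' W ≤ W'²`, i.e. `(log W)'' ≤ 0`.
-/

open Real Set intervalIntegral

lemma concaveOn_log_of_mul_deriv2_le_sq {W W' W'' : ℝ → ℝ} (hW₀ : ∀ x, 0 < W x)
    (hW : ∀ x, HasDerivAt W (W' x) x) (hW' : ∀ x, HasDerivAt W' (W'' x) x)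
    (hW'' : ∀ x, W'' x * W x ≤ W' x ^ 2) : ConcaveOn ℝ univ fun x => log (W x) := by
  have hlog : ∀ x, HasDerivAt (fun x => log (W x)) (W' x / W x) x :=
    fun x => (hW x).log (hW₀ x).ne'
  refine concaveOn_of_hasDerivWithinAt2_nonpos convex_univ
    (f'' := fun x => (W'' x * W x - W' x * W' x) / W x ^ 2)
    (fun x _ => (hlog x).continuousAt.continuousWithinAt)
    (fun x _ => (hlog x).hasDerivWithinAt)
    (fun x _ => ((hW' x).div (hW x) (hW₀ x).ne').hasDerivWithinAt) fun x _ => ?_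
  exact div_nonpos_of_nonpos_of_nonneg (by nlinarith [hW'' x]) (sq_nonneg _)

section LogConcaveDensity

variable {f g : ℝ → ℝ}

lemma mul_integral_le_sub_le_mul_integral (hf : ∀ t, HasDerivAt f (g t * f t) t)
    (hg : Antitone g) (hf₀ : ∀ t, 0 ≤ f t) {β α : ℝ} (hβα : β ≤ α) :
    g α * ∫ t in β..α, f t ≤ f α - f β ∧ f α - f β ≤ g β * ∫ t in β..α, f t := by
  have hfc : Continuous f := Differentiable.continuous fun t => (hf t).differentiableAt
  have hfi : IntervalIntegrable f MeasureTheory.volume β α := hfc.intervalIntegrable _ _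
  have hgfi : IntervalIntegrable (fun t => g t * f t) MeasureTheory.volume β α :=
    hg.intervalIntegrable.mul_continuousOn hfc.continuousOn
  rw [← integral_eq_sub_of_hasDerivAt (fun t _ => hf t) hgfi, ← integral_const_mul,
    ← integral_const_mul]
  exact ⟨integral_mono_on hβα (hfi.const_mul _) hgfi fun t ht =>
      mul_le_mul_of_nonneg_right (hg ht.2) (hf₀ t),
    integral_mono_on hβα hgfi (hfi.const_mul _) fun t ht =>
      mul_le_mul_of_nonneg_right (hg ht.1) (hf₀ t)⟩

lemma deriv_sub_mul_integral_le_sq (hf : ∀ t, HasDerivAt f (g t * f t) t)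
    (hg : Antitone g) (hf₀ : ∀ t, 0 ≤ f t) {β α : ℝ} (hβα : β ≤ α) :
    (g α * f α - g β * f β) * ∫ t in β..α, f t ≤ (f α - f β) ^ 2 := by
  obtain ⟨hα, hβ⟩ := mul_integral_le_sub_le_mul_integral hf hg hf₀ hβα
  nlinarith [mul_le_mul_of_nonneg_left hα (hf₀ α), mul_le_mul_of_nonneg_left hβ (hf₀ β)]

lemma hasDerivAt_integral_window (hf : Continuous f) (a b u : ℝ) :
    HasDerivAt (fun u => ∫ t in (u - b)..(u - a), f t) (f (u - a) - f (u - b)) u := by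
  have hF : ∀ c, HasDerivAt (fun u => ∫ t in (0 : ℝ)..(u - c), f t) (f (u - c)) u := fun c =>
    (hf.integral_hasStrictDerivAt 0 (u - c)).hasDerivAt.comp_sub_const u c
  refine ((hF a).sub (hF b)).congr_of_eventuallyEq (Filter.Eventually.of_forall fun v => ?_)
  exact (integral_interval_sub_left (hf.intervalIntegrable _ _) (hf.intervalIntegrable _ _)).symm

lemma integral_window_pos (hf : Continuous f) (hf₀ : ∀ t, 0 < f t) {a b : ℝ} (hab : a < b)
    (u : ℝ) : 0 < ∫ t in (u - b)..(u - a), f t :=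
  intervalIntegral_pos_of_pos (hf.intervalIntegrable _ _) hf₀ (by linarith)

theorem concaveOn_log_integral_window (hf : ∀ t, HasDerivAt f (g t * f t) t)
    (hg : Antitone g) (hf₀ : ∀ t, 0 < f t) {a b : ℝ} (hab : a < b) :
    ConcaveOn ℝ univ fun u => log (∫ t in (u - b)..(u - a), f t) := by
  have hfc : Continuous f := Differentiable.continuous fun t => (hf t).differentiableAt
  refine concaveOn_log_of_mul_deriv2_le_sq (integral_window_pos hfc hf₀ hab)
    (hasDerivAt_integral_window hfc a b)
    (fun u => ((hf (u - a)).comp_sub_const u a).sub ((hf (u - b)).comp_sub_const u b))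
    fun u => ?_
  exact deriv_sub_mul_integral_le_sq hf hg (fun t => (hf₀ t).le) (by linarith)

end LogConcaveDensity

lemma hasDerivAt_exp_neg_sq_div_two (t : ℝ) :
    HasDerivAt (fun t => exp (-t ^ 2 / 2)) (-t * exp (-t ^ 2 / 2)) t := by
  have h : HasDerivAt (fun t : ℝ => -t ^ 2 / 2) (-t) t :=
    ((hasDerivAt_pow 2 t).neg.div_const 2).congr_deriv (by ring)
  simpa [mul_comm] using h.exp

lemma erf_div_sqrt_two_sub_erf_div_sqrt_two (x y : ℝ) :
    erf (x / √2) - erf (y / √2) = 2 / (√π * √2) * ∫ s in y..x, exp (-s ^ 2 / 2) := by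
  have hφ : Continuous fun t : ℝ => exp (-t ^ 2) := by fun_prop
  have hsubst : ∀ s : ℝ, exp (-(s / √2) ^ 2) = exp (-s ^ 2 / 2) := fun s => by
    rw [div_pow, sq_sqrt zero_le_two, neg_div]
  rw [erf, erf, ← mul_sub, integral_interval_sub_left (hφ.intervalIntegrable _ _)
    (hφ.intervalIntegrable _ _), ← inv_smul_integral_comp_div, smul_eq_mul]
  simp only [hsubst]
  field_simp

/-- for `a < b`, the function `h z = erf((z−a)/√2) − erf((z−b)/√2)` is
positive everywhere and `log ∘ h` is concave on `ℝ`. -/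
theorem erf_diff_pos_and_logConcave
    (a b : ℝ) (hab : a < b) :
    (∀ z : ℝ, 0 < erf ((z - a) / Real.sqrt 2) - erf ((z - b) / Real.sqrt 2)) ∧
      ConcaveOn ℝ Set.univ
        (fun z : ℝ =>
          Real.log (erf ((z - a) / Real.sqrt 2) - erf ((z - b) / Real.sqrt 2))) := by
  have hc : 0 < 2 / (√π * √2) := by positivity
  have hW := integral_window_pos (by fun_prop) (fun t => exp_pos (-t ^ 2 / 2)) hab
  simp only [erf_div_sqrt_two_sub_erf_div_sqrt_two]
  refine ⟨fun z => mul_pos hc (hW z), ?_⟩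
  refine ((concaveOn_log_integral_window hasDerivAt_exp_neg_sq_div_two
    (fun _ _ h => neg_le_neg h) (fun t => exp_pos _) hab).add_const (log (2 / (√π * √2)))).congr
    fun z _ => ?_
  rw [Pi.add_apply, log_mul hc.ne' (hW z).ne', add_comm]
end

section
/- Fix x̌, x̂ ∈ ℝⁿ with x̌⁽ˡ⁾ ≤ x̂⁽ˡ⁾ for every l, let g be the associated erf-product function, and let v̄ = (x̌ + x̂)/2 be the center of the box [x̌, x̂]. Let ž, ẑ ∈ ℝⁿ with ž⁽ˡ⁾ ≤ ẑ⁽ˡ⁾ for all l, and define z_max ∈ ℝⁿ coordinatewise by z_max⁽ˡ⁾ = v̄⁽ˡ⁾ if v̄⁽ˡ⁾ ∈ [ž⁽ˡ⁾, ẑ⁽ˡ⁾], and otherwise z_max⁽ˡ⁾ is the endpoint of [ž⁽ˡ⁾, ẑ⁽ˡ⁾] closer to v̄⁽ˡ⁾. Then g(z) ≤ g(z_max) for every z in the box [ž, ẑ]. -/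
lemma phi_intable (a b : ℝ) :
    IntervalIntegrable (fun t : ℝ => Real.exp (-t ^ 2)) MeasureTheory.volume a b :=
  (Real.continuous_exp.comp (by continuity)).intervalIntegrable a b

lemma erf_sub (p q : ℝ) :
    erf q - erf p = (2 / Real.sqrt Real.pi) * ∫ t in p..q, Real.exp (-t ^ 2) := by
  unfold erf
  rw [← mul_sub, intervalIntegral.integral_interval_sub_left (phi_intable 0 q) (phi_intable 0 p)]

lemma erf_mono : Monotone erf := by
  intro p q hpq
  have h : 0 ≤ erf q - erf p := by
    rw [erf_sub]
    apply mul_nonneg (by positivity)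
    exact intervalIntegral.integral_nonneg hpq (fun t _ => (Real.exp_pos _).le)
  linarith

lemma erf_neg (x : ℝ) : erf (-x) = - erf x := by
  unfold erf
  have h1 : ∫ t in (0:ℝ)..(-x), Real.exp (-t ^ 2) = - ∫ t in (-x)..(0:ℝ), Real.exp (-t ^ 2) :=
    intervalIntegral.integral_symm _ _
  have h2 : ∫ t in (-x)..(0:ℝ), Real.exp (-t ^ 2)
      = ∫ t in (0:ℝ)..x, Real.exp (-(-t) ^ 2) := by
    rw [intervalIntegral.integral_comp_neg (fun t => Real.exp (-t ^ 2))]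
    norm_num
  simp only [neg_sq] at h2
  rw [h1, h2]; ring

lemma key (w : ℝ) (hw : 0 ≤ w) (d₁ d₂ : ℝ) (h0 : 0 ≤ d₂) (h12 : d₂ ≤ d₁) :
    erf ((d₁ + w) / Real.sqrt 2) - erf ((d₁ - w) / Real.sqrt 2) ≤
    erf ((d₂ + w) / Real.sqrt 2) - erf ((d₂ - w) / Real.sqrt 2) := by
  have hs : (0:ℝ) < Real.sqrt 2 := Real.sqrt_pos.mpr (by norm_num)
  set s := Real.sqrt 2 with hsdef
  have hA := erf_sub ((d₂ + w) / s) ((d₁ + w) / s)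
  have hB := erf_sub ((d₂ - w) / s) ((d₁ - w) / s)
  have hshift : ((d₁ + w) / s) = ((d₁ - w) / s) + 2 * w / s := by ring
  have hshift2 : ((d₂ + w) / s) = ((d₂ - w) / s) + 2 * w / s := by ring
  have hcomp : (∫ t in ((d₂ + w) / s)..((d₁ + w) / s), Real.exp (-t ^ 2))
      = ∫ t in ((d₂ - w) / s)..((d₁ - w) / s), Real.exp (-(t + 2 * w / s) ^ 2) := by
    rw [intervalIntegral.integral_comp_add_right (fun t => Real.exp (-t ^ 2)) (2 * w / s)]
    rw [hshift, hshift2]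
  have hle : (∫ t in ((d₂ - w) / s)..((d₁ - w) / s), Real.exp (-(t + 2 * w / s) ^ 2))
      ≤ ∫ t in ((d₂ - w) / s)..((d₁ - w) / s), Real.exp (-t ^ 2) := by
    apply intervalIntegral.integral_mono_on (by gcongr)
    · exact ((Real.continuous_exp.comp (by continuity)).intervalIntegrable _ _)
    · exact phi_intable _ _
    · intro t ht
      apply Real.exp_le_exp.mpr
      have e1 : (d₂ - w) / s = d₂ / s - w / s := by ring
      have h1 : d₂ / s - w / s ≤ t := e1 ▸ ht.1
      have h2 : (0:ℝ) ≤ 2 * w / s := by positivity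
      have h3 : (0:ℝ) ≤ d₂ / s := div_nonneg h0 hs.le
      have hx : (0:ℝ) ≤ 2 * w / s * (t + w / s) :=
        mul_nonneg h2 (by linarith)
      have expand : (t + 2 * w / s) ^ 2 - t ^ 2 = 2 * (2 * w / s * (t + w / s)) := by ring
      linarith
  have hC : (0:ℝ) ≤ 2 / Real.sqrt Real.pi := by positivity
  nlinarith [mul_le_mul_of_nonneg_left hle hC]

lemma erf_repr (a b z : ℝ) :
    erf ((z - a) / Real.sqrt 2) - erf ((z - b) / Real.sqrt 2)
      = erf ((|z - (a + b) / 2| + (b - a) / 2) / Real.sqrt 2)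
        - erf ((|z - (a + b) / 2| - (b - a) / 2) / Real.sqrt 2) := by
  rcases abs_cases (z - (a + b) / 2) with ⟨h, _⟩ | ⟨h, _⟩
  · rw [h]; ring_nf
  · rw [h]
    have e1 : (-(z - (a + b) / 2) + (b - a) / 2) / Real.sqrt 2
        = -((z - b) / Real.sqrt 2) := by ring
    have e2 : (-(z - (a + b) / 2) - (b - a) / 2) / Real.sqrt 2
        = -((z - a) / Real.sqrt 2) := by ring
    rw [e1, e2, erf_neg, erf_neg]; ring

lemma erf_diff_le (a b : ℝ) (hab : a ≤ b) (z₁ z₂ : ℝ)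
    (h : |z₂ - (a + b) / 2| ≤ |z₁ - (a + b) / 2|) :
    erf ((z₁ - a) / Real.sqrt 2) - erf ((z₁ - b) / Real.sqrt 2) ≤
    erf ((z₂ - a) / Real.sqrt 2) - erf ((z₂ - b) / Real.sqrt 2) := by
  rw [erf_repr a b z₁, erf_repr a b z₂]
  exact key ((b - a) / 2) (by linarith) _ _ (abs_nonneg _) h

lemma erf_diff_nonneg (a b z : ℝ) (hab : a ≤ b) :
    0 ≤ erf ((z - a) / Real.sqrt 2) - erf ((z - b) / Real.sqrt 2) := by
  have hs : (0:ℝ) < Real.sqrt 2 := Real.sqrt_pos.mpr (by norm_num)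
  have hd : (z - b) / Real.sqrt 2 ≤ (z - a) / Real.sqrt 2 := by gcongr <;> linarith
  have := erf_mono hd
  linarith

lemma clamp_abs_le (zlo zhi v z : ℝ) (h1 : zlo ≤ z) (h2 : z ≤ zhi) :
    |(if v ∈ Set.Icc zlo zhi then v
      else if |zlo - v| ≤ |zhi - v| then zlo else zhi) - v| ≤ |z - v| := by
  split_ifs with hm hle
  · simp [abs_nonneg]
  · simp only [Set.mem_Icc, not_and_or, not_le] at hm
    rcases hm with hv | hv
    · rw [abs_of_nonneg (by linarith : (0:ℝ) ≤ zlo - v),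
        abs_of_nonneg (by linarith : (0:ℝ) ≤ z - v)]
      linarith
    · rw [abs_of_nonpos (by linarith : zhi - v ≤ 0)] at hle
      rw [abs_of_nonpos (by linarith : z - v ≤ 0)]
      linarith
  · push_neg at hle
    simp only [Set.mem_Icc, not_and_or, not_le] at hm
    rcases hm with hv | hv
    · rw [abs_of_nonneg (by linarith : (0:ℝ) ≤ zlo - v)] at hle
      rw [abs_of_nonneg (by linarith : (0:ℝ) ≤ z - v)]
      have := le_abs_self (zhi - v)
      linarith
    · rw [abs_of_nonpos (by linarith : zhi - v ≤ 0),
        abs_of_nonpos (by linarith : z - v ≤ 0)]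
      linarith

/-- upper-bound half of Theorem 1: the maximum of `g` over the box of
candidate means `[ž, ẑ]` is attained at the coordinatewise clamp `z_max` of the center
`v̄ = (x̌ + x̂)/2` of the target box onto `[ž, ẑ]`. -/
theorem gerf_max_at_clamped_center
    {n : ℕ} (xlo xhi : Fin n → ℝ) (hx : ∀ l, xlo l ≤ xhi l)
    (zlo zhi : Fin n → ℝ) (hz : ∀ l, zlo l ≤ zhi l)
    (vbar : Fin n → ℝ) (hvbar : vbar = fun l => (xlo l + xhi l) / 2)
    (zmax : Fin n → ℝ)
    (hzmax : ∀ l, zmax l =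
      if vbar l ∈ Set.Icc (zlo l) (zhi l) then vbar l
      else if |zlo l - vbar l| ≤ |zhi l - vbar l| then zlo l else zhi l) :
    ∀ z ∈ Set.Icc zlo zhi, gerf xlo xhi z ≤ gerf xlo xhi zmax := by
  intro z hzmem
  unfold gerf
  apply mul_le_mul_of_nonneg_left ?_ (by positivity)
  apply Finset.prod_le_prod
  · intro l _
    exact erf_diff_nonneg _ _ _ (hx l)
  · intro l _
    apply erf_diff_le _ _ (hx l)
    have habs : |zmax l - vbar l| ≤ |z l - vbar l| := by
      rw [hzmax l]
      exact clamp_abs_le _ _ _ _ (hzmem.1 l) (hzmem.2 l)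
    have hv : vbar l = (xlo l + xhi l) / 2 := by rw [hvbar]
    rwa [hv] at habs
end
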